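/- arXiv:2501.07834 — 4 statements merged into one kernel-verified Lean document; each statement's English description precedes it below -/
import Mathlib

section
/- Let V be a finite type of subtasks and let p_f be a real number with 0 < p_f < 1. Let D_A, D_B : V → Finset V be two workflows (dependency maps whose immediate-predecessor relations are well-founded), and let P_A, P_B : V → ℝ be success-probability functions for D_A and D_B respectively. Suppose there exist subtasks v* and b with b ∉ D_A(v*) such that D_B(v*) = D_A(v*) ∪ {b}, and for every subtask v ≠ v* one has D_A(v) ⊆ D_B(v). Then the expected number of completed subtasks of Workflow A is strictly greater than that of Workflow B: ∑_{v ∈ V} P_A(v) > ∑_{v ∈ V} P_B(v). -/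
lemma workflow_prob_bounds
    {V : Type*} {p_f : ℝ} (hpf0 : 0 < p_f) (hpf1 : p_f < 1)
    {D : V → Finset V} (hwf : WellFounded (fun u v => u ∈ D v))
    {P : V → ℝ} (hP : ∀ v, P v = (1 - p_f) * ∏ i ∈ D v, P i) :
    ∀ v, 0 < P v ∧ P v < 1 := by
  intro v
  induction v using hwf.induction with
  | _ v ih =>
    have hprodpos : 0 < ∏ i ∈ D v, P i :=
      Finset.prod_pos fun i hi => (ih i hi).1
    have hprodle : ∏ i ∈ D v, P i ≤ 1 :=
      Finset.prod_le_one (fun i hi => (ih i hi).1.le) (fun i hi => (ih i hi).2.le)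
    have h1 : 0 < 1 - p_f := by linarith
    constructor
    · rw [hP v]; positivity
    · rw [hP v]
      calc (1 - p_f) * ∏ i ∈ D v, P i ≤ (1 - p_f) * 1 :=
            mul_le_mul_of_nonneg_left hprodle h1.le
        _ < 1 := by linarith

theorem flow_modular_workflow_strict
    (V : Type*) [Fintype V] [DecidableEq V]
    (p_f : ℝ) (hpf0 : 0 < p_f) (hpf1 : p_f < 1)
    (D_A D_B : V → Finset V)
    (hwfA : WellFounded (fun u v => u ∈ D_A v))
    (hwfB : WellFounded (fun u v => u ∈ D_B v))
    (P_A P_B : V → ℝ)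
    (hPA : ∀ v, P_A v = (1 - p_f) * ∏ i ∈ D_A v, P_A i)
    (hPB : ∀ v, P_B v = (1 - p_f) * ∏ i ∈ D_B v, P_B i)
    (vstar b : V) (hb : b ∉ D_A vstar)
    (hBstar : D_B vstar = insert b (D_A vstar))
    (hsub : ∀ v, v ≠ vstar → D_A v ⊆ D_B v) :
    ∑ v : V, P_A v > ∑ v : V, P_B v := by
  have hA := workflow_prob_bounds hpf0 hpf1 hwfA hPA
  have hB := workflow_prob_bounds hpf0 hpf1 hwfB hPB
  have h1 : 0 < 1 - p_f := by linarith
  have hsub' : ∀ v, D_A v ⊆ D_B v := by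
    intro v
    by_cases hv : v = vstar
    · subst hv; rw [hBstar]; exact Finset.subset_insert _ _
    · exact hsub v hv
  -- monotonicity: P_B ≤ P_A everywhere
  have hmono : ∀ v, P_B v ≤ P_A v := by
    intro v
    induction v using hwfB.induction with
    | _ v ih =>
      have step1 : ∏ i ∈ D_B v, P_B i ≤ ∏ i ∈ D_A v, P_B i := by
        rw [← Finset.prod_sdiff (hsub' v)]
        have hle1 : ∏ i ∈ D_B v \ D_A v, P_B i ≤ 1 :=
          Finset.prod_le_one (fun i _ => (hB i).1.le) (fun i _ => (hB i).2.le)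
        have hpos : 0 ≤ ∏ i ∈ D_A v, P_B i :=
          (Finset.prod_pos fun i _ => (hB i).1).le
        nlinarith [Finset.prod_pos (fun i (_ : i ∈ D_B v \ D_A v) => (hB i).1)]
      have step2 : ∏ i ∈ D_A v, P_B i ≤ ∏ i ∈ D_A v, P_A i :=
        Finset.prod_le_prod (fun i _ => (hB i).1.le)
          (fun i hi => ih i (hsub' v hi))
      rw [hPA v, hPB v]
      exact mul_le_mul_of_nonneg_left (step1.trans step2) h1.le
  -- strict at vstar
  have hstrict : P_B vstar < P_A vstar := by
    have hAprodpos : 0 < ∏ i ∈ D_A vstar, P_A i :=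
      Finset.prod_pos fun i _ => (hA i).1
    have hBprodle : ∏ i ∈ D_A vstar, P_B i ≤ ∏ i ∈ D_A vstar, P_A i :=
      Finset.prod_le_prod (fun i _ => (hB i).1.le) (fun i _ => hmono i)
    rw [hPA vstar, hPB vstar, hBstar, Finset.prod_insert hb]
    have hb1 : P_B b < 1 := (hB b).2
    have hb0 : 0 ≤ P_B b := (hB b).1.le
    have hBprodpos : 0 < ∏ i ∈ D_A vstar, P_B i :=
      Finset.prod_pos fun i _ => (hB i).1
    have : P_B b * ∏ i ∈ D_A vstar, P_B i < ∏ i ∈ D_A vstar, P_A i := by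
      calc P_B b * ∏ i ∈ D_A vstar, P_B i < 1 * ∏ i ∈ D_A vstar, P_B i := by
            exact mul_lt_mul_of_pos_right hb1 hBprodpos
        _ = ∏ i ∈ D_A vstar, P_B i := one_mul _
        _ ≤ ∏ i ∈ D_A vstar, P_A i := hBprodle
    exact mul_lt_mul_of_pos_left this h1
  exact Finset.sum_lt_sum (fun i _ => hmono i) ⟨vstar, Finset.mem_univ _, hstrict⟩
end

section
/- Let V be a finite type of subtasks and let p_f be a real number with 0 < p_f < 1. Let D_A, D_B : V → Finset V be two workflows whose immediate-predecessor relations are well-founded, and let P_A, P_B : V → ℝ be success-probability functions for D_A and D_B respectively. If D_A(v) ⊆ D_B(v) for every subtask v, then P_B(v) ≤ P_A(v) for every subtask v; in particular ∑_{v ∈ V} P_B(v) ≤ ∑_{v ∈ V} P_A(v). -/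
theorem flow_monotone_dependencies
    (V : Type*) [Fintype V] [DecidableEq V]
    (p_f : ℝ) (hpf0 : 0 < p_f) (hpf1 : p_f < 1)
    (D_A D_B : V → Finset V)
    (hwfA : WellFounded (fun u v => u ∈ D_A v))
    (hwfB : WellFounded (fun u v => u ∈ D_B v))
    (P_A P_B : V → ℝ)
    (hPA : ∀ v, P_A v = (1 - p_f) * ∏ i ∈ D_A v, P_A i)
    (hPB : ∀ v, P_B v = (1 - p_f) * ∏ i ∈ D_B v, P_B i)
    (hsub : ∀ v, D_A v ⊆ D_B v) :
    (∀ v, P_B v ≤ P_A v) ∧ ∑ v : V, P_B v ≤ ∑ v : V, P_A v := by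
  have h1 : (0:ℝ) ≤ 1 - p_f := by linarith
  have h2 : (1:ℝ) - p_f ≤ 1 := by linarith
  -- bounds lemma
  have bounds : ∀ (D : V → Finset V), WellFounded (fun u v => u ∈ D v) →
      ∀ (P : V → ℝ), (∀ v, P v = (1 - p_f) * ∏ i ∈ D v, P i) →
      ∀ v, 0 ≤ P v ∧ P v ≤ 1 := by
    intro D hwf P hP
    intro v
    induction v using hwf.induction with
    | _ v ih =>
      rw [hP v]
      have hnn : 0 ≤ ∏ i ∈ D v, P i := Finset.prod_nonneg (fun i hi => (ih i hi).1)
      have hle : ∏ i ∈ D v, P i ≤ 1 :=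
        Finset.prod_le_one (fun i hi => (ih i hi).1) (fun i hi => (ih i hi).2)
      constructor
      · positivity
      · calc (1 - p_f) * ∏ i ∈ D v, P i ≤ 1 * 1 := by
              apply mul_le_mul h2 hle hnn (by norm_num)
          _ = 1 := by ring
  have hA := bounds D_A hwfA P_A hPA
  have hB := bounds D_B hwfB P_B hPB
  have main : ∀ v, P_B v ≤ P_A v := by
    intro v
    induction v using hwfB.induction with
    | _ v ih =>
      rw [hPA v, hPB v]
      have hsplit : ∏ i ∈ D_B v, P_B i =
          (∏ i ∈ D_B v \ D_A v, P_B i) * ∏ i ∈ D_A v, P_B i :=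
        (Finset.prod_sdiff (hsub v)).symm
      have h3 : ∏ i ∈ D_B v, P_B i ≤ ∏ i ∈ D_A v, P_B i := by
        rw [hsplit]
        have hn : 0 ≤ ∏ i ∈ D_A v, P_B i :=
          Finset.prod_nonneg (fun i _ => (hB i).1)
        have hone : ∏ i ∈ D_B v \ D_A v, P_B i ≤ 1 :=
          Finset.prod_le_one (fun i _ => (hB i).1) (fun i _ => (hB i).2)
        nlinarith [Finset.prod_nonneg (fun i (_ : i ∈ D_B v \ D_A v) => (hB i).1)]
      have h4 : ∏ i ∈ D_A v, P_B i ≤ ∏ i ∈ D_A v, P_A i :=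
        Finset.prod_le_prod (fun i _ => (hB i).1) (fun i hi => ih i (hsub v hi))
      have := h3.trans h4
      nlinarith
  exact ⟨main, Finset.sum_le_sum (fun v _ => main v)⟩
end

section
/- Let V be a finite type of subtasks and let p_f be a real number with 0 < p_f < 1. Let D_A, D_B : V → Finset V be two workflows whose immediate-predecessor relations are well-founded, and let P_A, P_B : V → ℝ be success-probability functions for D_A and D_B respectively. Fix a subtask v* and suppose D_A(v) = D_B(v) for every v ≠ v*. Then for every subtask u ≠ v* such that v* is not a transitive ancestor of u (i.e., the pair (v*, u) does not lie in the transitive closure of the relation x ≺ y ↔ x ∈ D_B(y)), one has P_A(u) = P_B(u). -/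
theorem flow_unaffected_subtasks
    (V : Type*) [Fintype V] [DecidableEq V]
    (p_f : ℝ) (hpf0 : 0 < p_f) (hpf1 : p_f < 1)
    (D_A D_B : V → Finset V)
    (hwfA : WellFounded (fun u v => u ∈ D_A v))
    (hwfB : WellFounded (fun u v => u ∈ D_B v))
    (P_A P_B : V → ℝ)
    (hPA : ∀ v, P_A v = (1 - p_f) * ∏ i ∈ D_A v, P_A i)
    (hPB : ∀ v, P_B v = (1 - p_f) * ∏ i ∈ D_B v, P_B i)
    (vstar : V)
    (heq : ∀ v, v ≠ vstar → D_A v = D_B v) :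
    ∀ u, u ≠ vstar →
      ¬ Relation.TransGen (fun x y => x ∈ D_B y) vstar u →
      P_A u = P_B u := by
  intro u
  induction u using hwfB.induction with
  | _ u ih =>
    intro hu hna
    rw [hPA, hPB, heq u hu]
    congr 1
    apply Finset.prod_congr rfl
    intro i hi
    have hiv : i ≠ vstar := by
      rintro rfl
      exact hna (Relation.TransGen.single hi)
    exact ih i hi hiv (fun h => hna (h.tail hi))
end

section
/- Let V be a finite type of subtasks and let p_f be a real number with 0 < p_f < 1. Let D_A, D_B : V → Finset V be two workflows whose immediate-predecessor relations are well-founded, and let P_A, P_B : V → ℝ be success-probability functions for D_A and D_B respectively. Suppose there exist subtasks v* and b with b ∉ D_A(v*) such that D_B(v*) = D_A(v*) ∪ {b}, and D_A(v) = D_B(v) for every v ≠ v*. Then P_B(v*) = P_A(v*) · P_A(b), and consequently P_B(v*) < P_A(v*). -/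
theorem flow_extra_dependency_decreases_prob
    (V : Type*) [Fintype V] [DecidableEq V]
    (p_f : ℝ) (hpf0 : 0 < p_f) (hpf1 : p_f < 1)
    (D_A D_B : V → Finset V)
    (hwfA : WellFounded (fun u v => u ∈ D_A v))
    (hwfB : WellFounded (fun u v => u ∈ D_B v))
    (P_A P_B : V → ℝ)
    (hPA : ∀ v, P_A v = (1 - p_f) * ∏ i ∈ D_A v, P_A i)
    (hPB : ∀ v, P_B v = (1 - p_f) * ∏ i ∈ D_B v, P_B i)
    (vstar b : V) (hb : b ∉ D_A vstar)
    (hBstar : D_B vstar = insert b (D_A vstar))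
    (heq : ∀ v, v ≠ vstar → D_A v = D_B v) :
    P_B vstar = P_A vstar * P_A b ∧ P_B vstar < P_A vstar := by
  have hirr : ∀ v, ¬ Relation.TransGen (fun u v => u ∈ D_B v) v v :=
    fun v h => (hwfB.transGen.isIrrefl).irrefl v h
  -- bounds for P_A
  have hA : ∀ v, 0 < P_A v ∧ P_A v < 1 := by
    intro v
    induction v using hwfA.induction with
    | _ v ih =>
      rw [hPA v]
      have hpos : 0 < ∏ i ∈ D_A v, P_A i := Finset.prod_pos fun i hi => (ih i hi).1
      have hle : ∏ i ∈ D_A v, P_A i ≤ 1 :=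
        Finset.prod_le_one (fun i hi => (ih i hi).1.le) (fun i hi => (ih i hi).2.le)
      constructor
      · have : 0 < 1 - p_f := by linarith
        exact mul_pos this hpos
      · nlinarith
  -- P_A = P_B away from vstar
  have key : ∀ v, v ≠ vstar → ¬ Relation.TransGen (fun u v => u ∈ D_B v) vstar v →
      P_A v = P_B v := by
    intro v
    induction v using hwfB.induction with
    | _ v ih =>
      intro hv hnt
      rw [hPA v, hPB v, heq v hv]
      congr 1
      refine Finset.prod_congr rfl fun i hi => ?_
      refine ih i hi ?_ ?_
      · rintro rfl; exact hnt (Relation.TransGen.single hi)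
      · intro h; exact hnt (h.tail hi)
  have hPeq : ∀ i ∈ D_B vstar, P_B i = P_A i := by
    intro i hi
    refine (key i ?_ ?_).symm
    · rintro rfl; exact hirr _ (Relation.TransGen.single hi)
    · intro h; exact hirr vstar (h.tail hi)
  have hmain : P_B vstar = P_A vstar * P_A b := by
    rw [hPB vstar, Finset.prod_congr rfl hPeq, hBstar, Finset.prod_insert hb, hPA vstar]
    ring
  refine ⟨hmain, ?_⟩
  have h1 := hA vstar
  have h2 := hA b
  nlinarith [h1.1, h1.2, h2.1, h2.2]
end
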